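/- arXiv:math/0512254 — 2 statements merged into one kernel-verified Lean document; each statement's English description precedes it below -/
import Mathlib

section
/- Let Λ be a generalised Bratteli diagram, let {s_λ : λ ∈ Λ} be a Cuntz–Krieger Λ-family in a C*-algebra A, and let τ : A → ℂ be a trace (a linear functional with τ(ab) = τ(ba) for all a, b ∈ A). Let α and β be blue paths and μ a red path, with the products s_α s_μ s_β* and s_α s_μ* s_β* formed in A. If τ(s_α s_μ s_β*) ≠ 0 or τ(s_α s_μ* s_β*) ≠ 0, then α = β and μ = λ(s(α))^m for some m ∈ ℕ, where λ(s(α))^m denotes the m-fold concatenation of the isolated red cycle λ(s(α)) at the vertex s(α) (with λ(s(α))⁰ := s(α)). -/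
open scoped ENNReal

/-- A rank-2 graph (`2`-graph): a countable category whose morphisms (paths) carry a
degree functor `d : Path → ℕ × ℕ` satisfying the unique factorisation property.
Vertices are identified with the paths of degree `(0,0)`; composition is a total
function whose behaviour is constrained only on composable pairs (`s p = r q`). -/
structure TwoGraph where
  Path : Type
  countable : Countable Path
  d : Path → ℕ × ℕ
  r : Path → Path
  s : Path → Path
  comp : Path → Path → Path
  d_r : ∀ p, d (r p) = 0
  d_s : ∀ p, d (s p) = 0
  r_vertex : ∀ p, d p = 0 → r p = p
  s_vertex : ∀ p, d p = 0 → s p = p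
  id_comp : ∀ p, comp (r p) p = p
  comp_id : ∀ p, comp p (s p) = p
  r_comp : ∀ p q, s p = r q → r (comp p q) = r p
  s_comp : ∀ p q, s p = r q → s (comp p q) = s q
  d_comp : ∀ p q, s p = r q → d (comp p q) = d p + d q
  comp_assoc : ∀ p q t, s p = r q → s q = r t → comp (comp p q) t = comp p (comp q t)
  factor : ∀ (lam : Path) (m n : ℕ × ℕ), d lam = m + n →
    ∃! mn : Path × Path,
      d mn.1 = m ∧ d mn.2 = n ∧ s mn.1 = r mn.2 ∧ comp mn.1 mn.2 = lam

namespace TwoGraph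

variable (G : TwoGraph)

/-- Vertices are the paths of degree `0`. -/
def IsVertex (p : G.Path) : Prop := G.d p = 0

/-- A blue path: one whose degree lies in `ℕ e₁`. -/
def IsBlue (p : G.Path) : Prop := (G.d p).2 = 0

/-- A red path: one whose degree lies in `ℕ e₂`. -/
def IsRed (p : G.Path) : Prop := (G.d p).1 = 0

/-- A blue edge: a path of degree `e₁ = (1,0)`. -/
def IsBlueEdge (p : G.Path) : Prop := G.d p = (1, 0)

/-- A red edge: a path of degree `e₂ = (0,1)`. -/
def IsRedEdge (p : G.Path) : Prop := G.d p = (0, 1)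

/-- `Λ` is row-finite: `vΛⁿ` is finite for every vertex `v` and degree `n`. -/
def RowFinite : Prop :=
  ∀ (v : G.Path) (n : ℕ × ℕ), G.IsVertex v →
    {p : G.Path | G.r p = v ∧ G.d p = n}.Finite

/-- `Λ` is a finite `2`-graph: `Λⁿ` is finite for every degree `n`. -/
def FinitePaths : Prop := ∀ n : ℕ × ℕ, {p : G.Path | G.d p = n}.Finite

/-- `μ` is an initial segment of `lam`, i.e. `lam = μ ν` for some `ν`. -/
def InitSeg (μ lam : G.Path) : Prop := ∃ ν, G.s μ = G.r ν ∧ G.comp μ ν = lam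

/-- `μ` is a final segment of `lam`, i.e. `lam = ν μ` for some `ν`. -/
def FinalSeg (μ lam : G.Path) : Prop := ∃ ν, G.s ν = G.r μ ∧ G.comp ν μ = lam

/-- The vertex `v` lies on the path `lam`, i.e. `v = lam(n)` for some `0 ≤ n ≤ d lam`. -/
def OnPath (lam v : G.Path) : Prop :=
  G.IsVertex v ∧ ∃ μ, G.InitSeg μ lam ∧ G.s μ = v

/-- A cycle: `d lam ≠ 0`, `r lam = s lam`, and `lam(n) ≠ s lam` for `0 < n < d lam`. -/
def IsCycle (lam : G.Path) : Prop :=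
  G.d lam ≠ 0 ∧ G.r lam = G.s lam ∧
    ∀ μ, G.InitSeg μ lam → G.d μ ≠ 0 → G.d μ ≠ G.d lam → G.s μ ≠ G.s lam

/-- `lam` has no entrance: for `n ≤ d lam`, every path of degree `n` with range `r lam`
is the initial segment `lam(0,n)`. -/
def HasNoEntrance (lam : G.Path) : Prop :=
  ∀ n : ℕ × ℕ, n ≤ G.d lam → ∀ μ, G.d μ = n → G.r μ = G.r lam → G.InitSeg μ lam

/-- `lam` has no exit: for `n ≤ d lam`, every path of degree `n` with source `s lam`
is the final segment `lam(d lam - n, d lam)`. -/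
def HasNoExit (lam : G.Path) : Prop :=
  ∀ n : ℕ × ℕ, n ≤ G.d lam → ∀ μ, G.d μ = n → G.s μ = G.s lam → G.FinalSeg μ lam

/-- An isolated cycle: no entrances and no exits. -/
def IsIsolated (lam : G.Path) : Prop := G.HasNoEntrance lam ∧ G.HasNoExit lam

/-- An isolated cycle in the red graph. -/
def IsIsolatedRedCycle (lam : G.Path) : Prop :=
  G.IsRed lam ∧ G.IsCycle lam ∧ G.IsIsolated lam

/-- Condition (3.1): `Λ` is row-finite, the blue graph contains no cycles, and each
vertex is the range of an isolated cycle in the red graph. -/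
def Cond31 : Prop :=
  G.RowFinite ∧ (∀ p, G.IsBlue p → ¬ G.IsCycle p) ∧
    ∀ v, G.IsVertex v → ∃ lam, G.IsIsolatedRedCycle lam ∧ G.r lam = v

/-- A source of the blue graph: a vertex receiving no blue edges. -/
def IsBlueSource (v : G.Path) : Prop :=
  G.IsVertex v ∧ ∀ e, G.IsBlueEdge e → G.r e ≠ v

/-- A sink of the blue graph: a vertex emitting no blue edges. -/
def IsBlueSink (v : G.Path) : Prop :=
  G.IsVertex v ∧ ∀ e, G.IsBlueEdge e → G.s e ≠ v

/-- `Λ^{≤ n}`. -/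
def LeSet (n : ℕ × ℕ) : Set G.Path :=
  {lam | G.d lam ≤ n ∧
    ∀ μ, G.s lam = G.r μ → G.comp lam μ ≠ lam → ¬ G.d (G.comp lam μ) ≤ n}

/-- `IsSwap ρ τ τ' ρ'` says that `(τ', ρ') = 𝓕(ρ, τ)` is the factorisation of `ρτ`
with the degrees in the reversed order: `τ'ρ' = ρτ`, `d τ' = d τ` and `d ρ' = d ρ`. -/
def IsSwap (ρ τ τ' ρ' : G.Path) : Prop :=
  G.s ρ = G.r τ ∧ G.s τ' = G.r ρ' ∧ G.d τ' = G.d τ ∧ G.d ρ' = G.d ρ ∧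
    G.comp τ' ρ' = G.comp ρ τ

/-- The edge `e` occurs at position `n` in the red path `μ`. -/
def OccAt (μ e : G.Path) (n : ℕ) : Prop :=
  ∃ ρ ξ, G.d ρ = (0, n) ∧ G.s ρ = G.r e ∧ G.s e = G.r ξ ∧
    G.comp ρ (G.comp e ξ) = μ

/-- `⟨μ, e⟩`: the number of occurrences of the red edge `e` in the red path `μ`. -/
noncomputable def occCount (μ e : G.Path) : ℕ :=
  Nat.card {n : ℕ // G.OccAt μ e n}

/-- Membership in `Y = (blue Λ)S`: a blue path whose source is a source of the
blue graph. -/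
def InY (α : G.Path) : Prop := G.IsBlue α ∧ G.IsBlueSource (G.s α)

/-- One step of the factorisation permutation `𝓕` of the blue paths of a GBD:
`α' = 𝓕(α)` iff `f α = α' f'` for (the) red edges `f, f'` with `s f = r α`. -/
def FStep (α α' : G.Path) : Prop :=
  G.IsBlue α ∧ G.IsBlue α' ∧
    ∃ f f', G.IsRedEdge f ∧ G.IsRedEdge f' ∧ G.s f = G.r α ∧ G.s α' = G.r f' ∧
      G.comp f α = G.comp α' f'

end TwoGraph

/-- `k`-fold iteration of the factorisation permutation, as a relation. -/
def TwoGraph.FIter (G : TwoGraph) : ℕ → G.Path → G.Path → Prop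
  | 0, α, α' => α = α'
  | k + 1, α, α' => ∃ β, G.FStep α β ∧ TwoGraph.FIter G k β α'

namespace TwoGraph

variable (G : TwoGraph)

/-- `o(α) = k`: `k` is the order of the blue path `α` under the factorisation
permutation `𝓕`. -/
def HasOrder (α : G.Path) (k : ℕ) : Prop :=
  0 < k ∧ G.FIter k α α ∧ ∀ m, 0 < m → m < k → ¬ G.FIter m α α

end TwoGraph

/-- `IsChainComp [e₁, …, eₙ] β` says `β = e₁ e₂ ⋯ eₙ`. -/
def TwoGraph.IsChainComp (G : TwoGraph) : List G.Path → G.Path → Prop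
  | [], β => G.IsVertex β
  | e :: l, β => ∃ γ, TwoGraph.IsChainComp G l γ ∧ G.s e = G.r γ ∧ β = G.comp e γ

/-- `cyclePow lam m = lam^m`, the `m`-fold concatenation of the cycle `lam`,
with `lam^0 = s lam`. -/
def TwoGraph.cyclePow (G : TwoGraph) (lam : G.Path) : ℕ → G.Path
  | 0 => G.s lam
  | m + 1 => G.comp lam (TwoGraph.cyclePow G lam m)

namespace TwoGraph

variable (G : TwoGraph)

/-! ### Relative (sub-2-graph) versions of the basic notions -/

/-- `μ` is an initial segment of `lam` within `P`. -/
def InitSegIn (P : Set G.Path) (μ lam : G.Path) : Prop :=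
  ∃ ν ∈ P, G.s μ = G.r ν ∧ G.comp μ ν = lam

/-- `μ` is a final segment of `lam` within `P`. -/
def FinalSegIn (P : Set G.Path) (μ lam : G.Path) : Prop :=
  ∃ ν ∈ P, G.s ν = G.r μ ∧ G.comp ν μ = lam

/-- A cycle of the sub-2-graph with path-set `P`. -/
def IsCycleIn (P : Set G.Path) (lam : G.Path) : Prop :=
  lam ∈ P ∧ G.d lam ≠ 0 ∧ G.r lam = G.s lam ∧
    ∀ μ ∈ P, G.InitSegIn P μ lam → G.d μ ≠ 0 → G.d μ ≠ G.d lam → G.s μ ≠ G.s lam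

def HasNoEntranceIn (P : Set G.Path) (lam : G.Path) : Prop :=
  ∀ n : ℕ × ℕ, n ≤ G.d lam → ∀ μ ∈ P, G.d μ = n → G.r μ = G.r lam → G.InitSegIn P μ lam

def HasNoExitIn (P : Set G.Path) (lam : G.Path) : Prop :=
  ∀ n : ℕ × ℕ, n ≤ G.d lam → ∀ μ ∈ P, G.d μ = n → G.s μ = G.s lam → G.FinalSegIn P μ lam

/-- An isolated cycle of the red graph of the sub-2-graph with path-set `P`. -/
def IsIsolatedRedCycleIn (P : Set G.Path) (lam : G.Path) : Prop :=
  lam ∈ P ∧ G.IsRed lam ∧ G.IsCycleIn P lam ∧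
    G.HasNoEntranceIn P lam ∧ G.HasNoExitIn P lam

def RowFiniteIn (P : Set G.Path) : Prop :=
  ∀ (v : G.Path) (n : ℕ × ℕ), G.IsVertex v →
    {p : G.Path | p ∈ P ∧ G.r p = v ∧ G.d p = n}.Finite

/-- A source of the blue graph of the sub-2-graph with path-set `P`. -/
def IsBlueSourceIn (P : Set G.Path) (v : G.Path) : Prop :=
  v ∈ P ∧ G.IsVertex v ∧ ∀ e ∈ P, G.IsBlueEdge e → G.r e ≠ v

/-- Condition (3.1) for the sub-2-graph with path-set `P`. -/
def Cond31In (P : Set G.Path) : Prop :=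
  G.RowFiniteIn P ∧ (∀ p ∈ P, G.IsBlue p → ¬ G.IsCycleIn P p) ∧
    ∀ v ∈ P, G.IsVertex v → ∃ lam, G.IsIsolatedRedCycleIn P lam ∧ G.r lam = v

/-- `Λ_j = {λ ∈ Λ : s(λ) Λ W ≠ ∅}`: the paths admitting a path from their source
into the vertex set `W`. -/
def subGraphTo (W : Set G.Path) : Set G.Path :=
  {p | ∃ μ, G.r μ = G.s p ∧ G.s μ ∈ W}

/-- `Λ` has large-permutation factorisations. -/
def HasLPF : Prop :=
  ∀ v, G.IsVertex v → ∀ l : ℕ, 0 < l → ∃ N : ℕ,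
    ∀ α, G.IsBlue α → G.r α = v → G.d α = (N, 0) →
      ∀ k, G.HasOrder α k → l < k

end TwoGraph

/-- A generalised Bratteli diagram of depth `N ∈ ℕ ∪ {∞}` with vertex decomposition
`Λ⁰ = ⊔ₙ V n`. -/
structure IsGBD (G : TwoGraph) (N : ℕ∞) (V : ℕ → Set G.Path) : Prop where
  rowFinite : G.RowFinite
  level_nonempty : ∀ n : ℕ, (n : ℕ∞) ≤ N → (V n).Nonempty
  level_finite : ∀ n : ℕ, (V n).Finite
  level_empty : ∀ n : ℕ, ¬ ((n : ℕ∞) ≤ N) → V n = ∅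
  level_vertex : ∀ n, V n ⊆ {v | G.IsVertex v}
  cover : ∀ v, G.IsVertex v → ∃ n, v ∈ V n
  level_disjoint : ∀ m n, m ≠ n → Disjoint (V m) (V n)
  blue_level : ∀ e, G.IsBlueEdge e → ∃ n, G.r e ∈ V n ∧ G.s e ∈ V (n + 1)
  sinks_bottom : ∀ v, G.IsBlueSink v → v ∈ V 0
  sources_top : ∀ v, G.IsBlueSource v → ∃ n : ℕ, (n : ℕ∞) = N ∧ v ∈ V n
  red_cycle : ∀ v, G.IsVertex v → ∃ lam, G.IsIsolatedRedCycle lam ∧ G.r lam = v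
  red_level : ∀ f, G.IsRedEdge f → ∃ n, G.r f ∈ V n ∧ G.s f ∈ V n

/-- The sub-2-graph `Λ_N` of paths joining vertices in the first `N` levels. -/
def levelPaths (G : TwoGraph) (V : ℕ → Set G.Path) (N : ℕ) : Set G.Path :=
  {p | (∃ n ≤ N, G.r p ∈ V n) ∧ (∃ n ≤ N, G.s p ∈ V n)}

/-- An infinite path in a 2-graph: a degree-preserving functor `Ω₂ → Λ`, recorded by
its segments `x(m,n)` for `m ≤ n` in `ℕ × ℕ`. -/
structure InfPath (G : TwoGraph) where
  seg : ℕ × ℕ → ℕ × ℕ → G.Path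
  deg : ∀ m n : ℕ × ℕ, m ≤ n → G.d (seg m n) = n - m
  range_seg : ∀ m n : ℕ × ℕ, m ≤ n → G.r (seg m n) = seg m m
  source_seg : ∀ m n : ℕ × ℕ, m ≤ n → G.s (seg m n) = seg n n
  comp_seg : ∀ m n p : ℕ × ℕ, m ≤ n → n ≤ p → G.comp (seg m n) (seg n p) = seg m p

/-- A Cuntz–Krieger `Λ`-family in a C*-algebra `A`. -/
structure CKFamily (G : TwoGraph) (A : Type*) [CStarAlgebra A] where
  S : G.Path → A
  ck1_sa : ∀ v, G.IsVertex v → star (S v) = S v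
  ck1_idem : ∀ v, G.IsVertex v → S v * S v = S v
  ck1_orth : ∀ v w, G.IsVertex v → G.IsVertex w → v ≠ w → S v * S w = 0
  ck2 : ∀ p q, G.s p = G.r q → S p * S q = S (G.comp p q)
  ck3 : ∀ p, star (S p) * S p = S (G.s p)
  ck4 : ∀ (v : G.Path) (n : ℕ × ℕ), G.IsVertex v →
    S v = ∑ᶠ lam ∈ {lam : G.Path | lam ∈ G.LeSet n ∧ G.r lam = v},
      S lam * star (S lam)

section CStar

variable {A : Type*} [CStarAlgebra A]

/-- The C*-subalgebra (as a subset) of `A` generated by a set `SS`. -/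
def generatedCStar (SS : Set A) : Set A :=
  closure (NonUnitalStarAlgebra.adjoin ℂ SS : Set A)

/-- `P` is full in the C*-algebra `Bset ⊆ A`: every closed two-sided ideal of `Bset`
containing `P` is all of `Bset`. -/
def FullIn (Bset : Set A) (P : A) : Prop :=
  ∀ I : Set A, I ⊆ Bset → IsClosed I →
    (∀ x ∈ I, ∀ y ∈ I, x + y ∈ I) → (∀ (c : ℂ), ∀ x ∈ I, c • x ∈ I) →
    (∀ a ∈ Bset, ∀ x ∈ I, a * x ∈ I ∧ x * a ∈ I) →
    P ∈ I → Bset ⊆ I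

/-- The sum `∑_{v ∈ Λ⁰} s_v`, which is the unit of `C*(Λ)` for finite `Λ`. -/
noncomputable def ckUnit (G : TwoGraph) (F : CKFamily G A) : A :=
  ∑ᶠ v ∈ {v : G.Path | G.IsVertex v}, F.S v

/-- The canonical unitary `U = ∑_{α ∈ Y} s_α s_{λ(α)} s_α*`. -/
noncomputable def ckU (G : TwoGraph) (F : CKFamily G A) (lam : G.Path → G.Path) : A :=
  ∑ᶠ α ∈ {α : G.Path | G.InY α}, F.S α * F.S (lam α) * star (F.S α)

/-- The gauge action: for every `z ∈ 𝕋²` there is a *-automorphism `γ_z` of the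
C*-subalgebra generated by the family with `γ_z(s_λ) = z^{d(λ)} s_λ`. -/
def GaugeInvariant (G : TwoGraph) (F : CKFamily G A) : Prop :=
  ∀ z₁ z₂ : ℂ, ‖z₁‖ = 1 → ‖z₂‖ = 1 → ∃ γ : A → A,
    Set.BijOn γ (generatedCStar (Set.range F.S)) (generatedCStar (Set.range F.S)) ∧
    (∀ x ∈ generatedCStar (Set.range F.S), ∀ y ∈ generatedCStar (Set.range F.S),
      γ (x + y) = γ x + γ y ∧ γ (x * y) = γ x * γ y) ∧
    (∀ x ∈ generatedCStar (Set.range F.S), γ (star x) = star (γ x)) ∧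
    (∀ (c : ℂ), ∀ x ∈ generatedCStar (Set.range F.S), γ (c • x) = c • γ x) ∧
    (∀ p : G.Path, γ (F.S p) = (z₁ ^ (G.d p).1 * z₂ ^ (G.d p).2) • F.S p)

end CStar

/-! ### Auxiliary lemmas for Statement 16 -/

section Aux

variable {A : Type*} [CStarAlgebra A] {G : TwoGraph} (F : CKFamily G A)

lemma exists_factor (G : TwoGraph) {p : G.Path} {m k : ℕ × ℕ} (h : G.d p = m + k) :
    ∃ p₁ p₂ : G.Path, G.d p₁ = m ∧ G.d p₂ = k ∧ G.s p₁ = G.r p₂ ∧ G.comp p₁ p₂ = p := by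
  obtain ⟨⟨p₁, p₂⟩, ⟨h1, h2, h3, h4⟩, -⟩ := G.factor p m k h
  exact ⟨p₁, p₂, h1, h2, h3, h4⟩

lemma S_mul_S_source (p : G.Path) : F.S p * F.S (G.s p) = F.S p := by
  rw [F.ck2 p (G.s p) (G.r_vertex (G.s p) (G.d_s p)).symm, G.comp_id]

lemma S_range_mul_S (p : G.Path) : F.S (G.r p) * F.S p = F.S p := by
  rw [F.ck2 (G.r p) p (G.s_vertex (G.r p) (G.d_r p)), G.id_comp]

lemma star_S_mul_range (p : G.Path) : star (F.S p) * F.S (G.r p) = star (F.S p) := by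
  calc star (F.S p) * F.S (G.r p) = star (F.S p) * star (F.S (G.r p)) := by
        rw [F.ck1_sa (G.r p) (G.d_r p)]
    _ = star (F.S (G.r p) * F.S p) := (star_mul _ _).symm
    _ = star (F.S p) := by rw [S_range_mul_S]

lemma source_mul_star_S (p : G.Path) : F.S (G.s p) * star (F.S p) = star (F.S p) := by
  calc F.S (G.s p) * star (F.S p) = star (F.S (G.s p)) * star (F.S p) := by
        rw [F.ck1_sa (G.s p) (G.d_s p)]
    _ = star (F.S p * F.S (G.s p)) := (star_mul _ _).symm
    _ = star (F.S p) := by rw [S_mul_S_source]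

lemma S_partial (p : G.Path) : F.S p * star (F.S p) * F.S p = F.S p := by
  rw [mul_assoc, F.ck3, S_mul_S_source]

lemma starS_partial (p : G.Path) : star (F.S p) * F.S p * star (F.S p) = star (F.S p) := by
  rw [F.ck3, source_mul_star_S]

lemma q_idem (p : G.Path) :
    (F.S p * star (F.S p)) * (F.S p * star (F.S p)) = F.S p * star (F.S p) := by
  calc (F.S p * star (F.S p)) * (F.S p * star (F.S p))
      = (F.S p * star (F.S p) * F.S p) * star (F.S p) := by simp only [mul_assoc]
    _ = F.S p * star (F.S p) := by rw [S_partial]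

lemma star_q (p : G.Path) : star (F.S p * star (F.S p)) = F.S p * star (F.S p) := by
  rw [star_mul, star_star]

lemma S_mul_S_eq_zero {p q : G.Path} (h : G.s p ≠ G.r q) : F.S p * F.S q = 0 := by
  conv_lhs => rw [← S_mul_S_source F p, ← S_range_mul_S F q]
  rw [mul_assoc, ← mul_assoc (F.S (G.s p)),
    F.ck1_orth _ _ (G.d_s p) (G.d_r q) h, zero_mul, mul_zero]

lemma S_mul_starS_eq_zero {p q : G.Path} (h : G.s p ≠ G.s q) :
    F.S p * star (F.S q) = 0 := by
  conv_lhs => rw [← S_mul_S_source F p, ← source_mul_star_S F q]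
  rw [mul_assoc, ← mul_assoc (F.S (G.s p)),
    F.ck1_orth _ _ (G.d_s p) (G.d_s q) h, zero_mul, mul_zero]

lemma starS_mul_S_eq_zero {p q : G.Path} (h : G.r p ≠ G.r q) :
    star (F.S p) * F.S q = 0 := by
  conv_lhs => rw [← star_S_mul_range F p, ← S_range_mul_S F q]
  rw [mul_assoc, ← mul_assoc (F.S (G.r p)),
    F.ck1_orth _ _ (G.d_r p) (G.d_r q) h, zero_mul, mul_zero]

lemma mem_leSet_of_deg (G : TwoGraph) {p : G.Path} {n : ℕ × ℕ} (h : G.d p = n) :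
    p ∈ G.LeSet n := by
  refine ⟨h.le, fun μ hcmp hne hle => hne ?_⟩
  rw [G.d_comp p μ hcmp, h] at hle
  have h1 : n.1 + (G.d μ).1 ≤ n.1 := by simpa using (Prod.le_def.mp hle).1
  have h2 : n.2 + (G.d μ).2 ≤ n.2 := by simpa using (Prod.le_def.mp hle).2
  have hμ0 : G.d μ = 0 := by
    have : G.d μ = ((G.d μ).1, (G.d μ).2) := rfl
    rw [this, Prod.mk_eq_zero]
    omega
  have hμs : μ = G.s p := by rw [← G.r_vertex μ hμ0]; exact hcmp.symm
  rw [hμs, G.comp_id]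

lemma finite_T (G : TwoGraph) (hRF : G.RowFinite) {v : G.Path} (hv : G.IsVertex v)
    (n : ℕ × ℕ) : {lam : G.Path | lam ∈ G.LeSet n ∧ G.r lam = v}.Finite := by
  classical
  apply Set.Finite.subset (s := ⋃ m ∈ (↑((Finset.range (n.1 + 1)) ×ˢ
      (Finset.range (n.2 + 1))) : Set (ℕ × ℕ)), {p : G.Path | G.r p = v ∧ G.d p = m})
  · exact Set.Finite.biUnion (Finset.finite_toSet _) (fun m _ => hRF v m hv)
  · rintro p ⟨⟨hle, -⟩, hr⟩
    have h1 := (Prod.le_def.mp hle).1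
    have h2 := (Prod.le_def.mp hle).2
    have hmem : (G.d p) ∈ (↑((Finset.range (n.1 + 1)) ×ˢ
        (Finset.range (n.2 + 1))) : Set (ℕ × ℕ)) := by
      simp only [Finset.coe_product, Set.mem_prod, Finset.mem_coe, Finset.mem_range]
      exact ⟨by omega, by omega⟩
    exact Set.mem_iUnion₂.mpr ⟨G.d p, hmem, ⟨hr, rfl⟩⟩

lemma proj_sandwich (x y : G.Path) :
    (F.S x * star (F.S x)) * (F.S y * star (F.S y)) * (F.S x * star (F.S x)) =
      star ((F.S y * star (F.S y)) * (F.S x * star (F.S x))) *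
        ((F.S y * star (F.S y)) * (F.S x * star (F.S x))) := by
  have h1 : star ((F.S y * star (F.S y)) * (F.S x * star (F.S x))) =
      (F.S x * star (F.S x)) * (F.S y * star (F.S y)) := by
    rw [star_mul, star_q, star_q]
  rw [h1]
  calc (F.S x * star (F.S x)) * (F.S y * star (F.S y)) * (F.S x * star (F.S x))
      = (F.S x * star (F.S x)) *
          ((F.S y * star (F.S y)) * (F.S y * star (F.S y))) * (F.S x * star (F.S x)) := by
        rw [q_idem]
    _ = (F.S x * star (F.S x)) * (F.S y * star (F.S y)) *
          ((F.S y * star (F.S y)) * (F.S x * star (F.S x))) := by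
        simp only [mul_assoc]

lemma range_proj_orth (hRF : G.RowFinite) {α β : G.Path}
    (hd : G.d α = G.d β) (hr : G.r α = G.r β) (hne : α ≠ β) :
    star (F.S β) * F.S α = 0 := by
  classical
  letI : PartialOrder A := CStarAlgebra.spectralOrder A
  haveI : StarOrderedRing A := CStarAlgebra.spectralOrderedRing A
  have hvV : G.IsVertex (G.r α) := G.d_r α
  have hTfin : {lam : G.Path | lam ∈ G.LeSet (G.d α) ∧ G.r lam = G.r α}.Finite :=
    finite_T G hRF hvV (G.d α)
  have hαt : α ∈ hTfin.toFinset := by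
    rw [Set.Finite.mem_toFinset]; exact ⟨mem_leSet_of_deg G rfl, rfl⟩
  have hβt : β ∈ hTfin.toFinset := by
    rw [Set.Finite.mem_toFinset]; exact ⟨mem_leSet_of_deg G hd.symm, hr.symm⟩
  have hβt' : β ∈ hTfin.toFinset.erase α :=
    Finset.mem_erase.mpr ⟨fun hh => hne hh.symm, hβt⟩
  have hsum : F.S (G.r α) = ∑ x ∈ hTfin.toFinset, F.S x * star (F.S x) := by
    rw [F.ck4 (G.r α) (G.d α) hvV, finsum_mem_eq_finite_toFinset_sum _ hTfin]
  have hsplit : F.S (G.r α) = F.S α * star (F.S α) + (F.S β * star (F.S β) +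
      ∑ x ∈ (hTfin.toFinset.erase α).erase β, F.S x * star (F.S x)) := by
    rw [hsum, ← Finset.add_sum_erase _ _ hαt, ← Finset.add_sum_erase _ _ hβt']
  have hRnn : (0 : A) ≤ ∑ x ∈ (hTfin.toFinset.erase α).erase β, F.S x * star (F.S x) := by
    refine Finset.sum_nonneg fun x _ => ?_
    simpa using star_mul_self_nonneg (star (F.S x))
  have h1 : F.S α * star (F.S α) * F.S (G.r α) = F.S α * star (F.S α) := by
    rw [mul_assoc, star_S_mul_range]
  have hkey : F.S α * star (F.S α) =
      F.S α * star (F.S α) * F.S (G.r α) * (F.S α * star (F.S α)) := by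
    rw [h1]; exact (q_idem F α).symm
  rw [hsplit] at hkey
  simp only [mul_add, add_mul] at hkey
  rw [q_idem F α, q_idem F α] at hkey
  have hzero : F.S α * star (F.S α) * (F.S β * star (F.S β)) * (F.S α * star (F.S α)) +
      F.S α * star (F.S α) * (∑ x ∈ (hTfin.toFinset.erase α).erase β,
        F.S x * star (F.S x)) * (F.S α * star (F.S α)) = 0 :=
    add_eq_left.mp hkey.symm
  have hx : (0 : A) ≤
      F.S α * star (F.S α) * (F.S β * star (F.S β)) * (F.S α * star (F.S α)) := by
    rw [proj_sandwich]; exact star_mul_self_nonneg _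
  have hy : (0 : A) ≤ F.S α * star (F.S α) * (∑ x ∈ (hTfin.toFinset.erase α).erase β,
      F.S x * star (F.S x)) * (F.S α * star (F.S α)) := by
    have := star_left_conjugate_nonneg hRnn (F.S α * star (F.S α))
    rwa [star_q] at this
  have h0 : F.S α * star (F.S α) * (F.S β * star (F.S β)) * (F.S α * star (F.S α)) = 0 := by
    refine le_antisymm ?_ hx
    calc F.S α * star (F.S α) * (F.S β * star (F.S β)) * (F.S α * star (F.S α))
        ≤ F.S α * star (F.S α) * (F.S β * star (F.S β)) * (F.S α * star (F.S α)) +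
          F.S α * star (F.S α) * (∑ x ∈ (hTfin.toFinset.erase α).erase β,
            F.S x * star (F.S x)) * (F.S α * star (F.S α)) := le_add_of_nonneg_right hy
      _ = 0 := hzero
  rw [proj_sandwich] at h0
  have hqq : (F.S β * star (F.S β)) * (F.S α * star (F.S α)) = 0 :=
    (CStarRing.star_mul_self_eq_zero_iff _).mp h0
  calc star (F.S β) * F.S α
      = (star (F.S β) * F.S β * star (F.S β)) * (F.S α * star (F.S α) * F.S α) := by
        rw [starS_partial, S_partial]
    _ = star (F.S β) * ((F.S β * star (F.S β)) * (F.S α * star (F.S α))) * F.S α := by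
        simp only [mul_assoc]
    _ = 0 := by rw [hqq, mul_zero, zero_mul]

lemma level_unique {G : TwoGraph} {N : ℕ∞} {V : ℕ → Set G.Path} (hGBD : IsGBD G N V)
    {v : G.Path} {m n : ℕ} (hm : v ∈ V m) (hn : v ∈ V n) : m = n := by
  by_contra hne
  exact Set.disjoint_left.mp (hGBD.level_disjoint m n hne) hm hn

lemma red_path_level {G : TwoGraph} {N : ℕ∞} {V : ℕ → Set G.Path} (hGBD : IsGBD G N V) :
    ∀ k : ℕ, ∀ μ : G.Path, G.IsRed μ → (G.d μ).2 = k →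
      ∃ n, G.r μ ∈ V n ∧ G.s μ ∈ V n := by
  intro k
  induction k with
  | zero =>
    intro μ hred hk
    have hv : G.d μ = 0 := by
      have : G.d μ = ((G.d μ).1, (G.d μ).2) := rfl
      rw [this, Prod.mk_eq_zero]; exact ⟨hred, hk⟩
    obtain ⟨n, hn⟩ := hGBD.cover μ hv
    exact ⟨n, by rw [G.r_vertex μ hv]; exact hn, by rw [G.s_vertex μ hv]; exact hn⟩
  | succ k ih =>
    intro μ hred hk
    have hdμ : G.d μ = (0, 1) + (0, k) := by
      have : G.d μ = ((G.d μ).1, (G.d μ).2) := rfl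
      rw [this, hred, hk, Prod.mk_add_mk]
      simp [add_comm]
    obtain ⟨e, μ', hde, hdμ', hcmp, hcomp⟩ := exists_factor G hdμ
    obtain ⟨n, hre, hse⟩ := hGBD.red_level e hde
    obtain ⟨n', hrμ', hsμ'⟩ := ih μ' (by rw [TwoGraph.IsRed, hdμ']) (by rw [hdμ'])
    have hnn' : n = n' := level_unique hGBD (by rw [← hcmp]; exact hse) hrμ'
    refine ⟨n, ?_, ?_⟩
    · rw [← hcomp, G.r_comp e μ' hcmp]; exact hre
    · rw [← hcomp, G.s_comp e μ' hcmp, hnn']; exact hsμ'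

lemma blue_path_level {G : TwoGraph} {N : ℕ∞} {V : ℕ → Set G.Path} (hGBD : IsGBD G N V) :
    ∀ a : ℕ, ∀ α : G.Path, G.IsBlue α → (G.d α).1 = a →
      ∀ n : ℕ, G.r α ∈ V n → G.s α ∈ V (n + a) := by
  intro a
  induction a with
  | zero =>
    intro α hblue ha n hn
    have hv : G.d α = 0 := by
      have : G.d α = ((G.d α).1, (G.d α).2) := rfl
      rw [this, Prod.mk_eq_zero]; exact ⟨ha, hblue⟩
    rw [G.s_vertex α hv]
    rw [G.r_vertex α hv] at hn
    simpa using hn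
  | succ a ih =>
    intro α hblue ha n hn
    have hdα : G.d α = (1, 0) + (a, 0) := by
      have : G.d α = ((G.d α).1, (G.d α).2) := rfl
      rw [this, hblue, ha, Prod.mk_add_mk]
      simp [add_comm]
    obtain ⟨e, α', hde, hdα', hcmp, hcomp⟩ := exists_factor G hdα
    obtain ⟨m, hre, hse⟩ := hGBD.blue_level e hde
    have hmn : m = n := level_unique hGBD hre (by rw [← G.r_comp e α' hcmp, hcomp]; exact hn)
    have hrα' : G.r α' ∈ V (n + 1) := by rw [← hcmp, ← hmn]; exact hse
    have := ih α' (by rw [TwoGraph.IsBlue, hdα']) (by rw [hdα']) (n + 1) hrα'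
    rw [← hcomp, G.s_comp e α' hcmp]
    have harith : n + 1 + a = n + (a + 1) := by omega
    rw [← harith]; exact this

lemma red_closed_eq_pow (G : TwoGraph) {lam : G.Path} (hlam : G.IsIsolatedRedCycle lam) :
    ∀ k : ℕ, ∀ μ : G.Path, G.IsRed μ → (G.d μ).2 = k →
      G.r μ = G.r lam → G.s μ = G.r lam → ∃ m : ℕ, μ = G.cyclePow lam m := by
  obtain ⟨hred, ⟨hd0, hrs, hcyc⟩, hnoent, -⟩ := hlam
  have hdlam : G.d lam = (0, (G.d lam).2) := by
    have : G.d lam = ((G.d lam).1, (G.d lam).2) := rfl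
    rw [this, hred]
  have hc : 0 < (G.d lam).2 := by
    rcases Nat.eq_zero_or_pos (G.d lam).2 with h0 | h
    · exact absurd (by rw [hdlam, h0]; rfl) hd0
    · exact h
  intro k
  induction k using Nat.strong_induction_on with
  | _ k ih =>
    intro μ hμred hk hr hs
    by_cases hcase : k < (G.d lam).2
    · -- μ is an initial segment of lam
      have hle : G.d μ ≤ G.d lam := by
        rw [Prod.le_def, hμred, hred]
        exact ⟨le_rfl, by omega⟩
      have hinit : G.InitSeg μ lam := hnoent (G.d μ) hle μ rfl hr
      rcases Nat.eq_zero_or_pos k with hk0 | hkpos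
      · have hvμ : G.d μ = 0 := by
          have : G.d μ = ((G.d μ).1, (G.d μ).2) := rfl
          rw [this, Prod.mk_eq_zero]
          exact ⟨hμred, by omega⟩
        refine ⟨0, ?_⟩
        show μ = G.s lam
        rw [← G.r_vertex μ hvμ, hr, hrs]
      · exfalso
        have hdne : G.d μ ≠ 0 := by
          intro hh
          have : (G.d μ).2 = 0 := by rw [hh]; rfl
          omega
        have hdne' : G.d μ ≠ G.d lam := by
          intro hh
          have : (G.d μ).2 = (G.d lam).2 := by rw [hh]
          omega
        exact hcyc μ hinit hdne hdne' (hs.trans hrs)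
    · -- peel off one copy of lam
      have hdμ : G.d μ = (0, (G.d lam).2) + (0, k - (G.d lam).2) := by
        have : G.d μ = ((G.d μ).1, (G.d μ).2) := rfl
        rw [this, hμred, hk, Prod.mk_add_mk]
        have : (G.d lam).2 + (k - (G.d lam).2) = k := by omega
        rw [this]
      obtain ⟨μ₁, μ₂, h1, h2, hcm, hcp⟩ := exists_factor G hdμ
      have hdμ₁ : G.d μ₁ = G.d lam := by rw [h1, ← hdlam]
      have hrμ₁ : G.r μ₁ = G.r lam := by rw [← hr, ← hcp, G.r_comp μ₁ μ₂ hcm]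
      obtain ⟨ν, hν1, hν2⟩ := hnoent (G.d lam) le_rfl μ₁ hdμ₁ hrμ₁
      have hdν : G.d ν = 0 := by
        have hdd := G.d_comp μ₁ ν hν1
        rw [hν2, hdμ₁] at hdd
        exact (add_eq_left.mp hdd.symm)
      have hμ₁ : μ₁ = lam := by
        rw [← hν2, show ν = G.s μ₁ from by rw [← G.r_vertex ν hdν]; exact hν1.symm, G.comp_id]
      have hrμ₂ : G.r μ₂ = G.r lam := by rw [← hcm, hμ₁, ← hrs]
      have hsμ₂ : G.s μ₂ = G.r lam := by rw [← hs, ← hcp, G.s_comp μ₁ μ₂ hcm]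
      have hlt : k - (G.d lam).2 < k := by omega
      obtain ⟨m, hm⟩ := ih (k - (G.d lam).2) hlt μ₂
        (by rw [TwoGraph.IsRed, h2]) (by rw [h2]) hrμ₂ hsμ₂
      exact ⟨m + 1, by rw [← hcp, hμ₁, hm]; rfl⟩

end Aux

/-- A trace vanishes on `s_α s_μ s_β*` and `s_α s_μ* s_β*` unless
`α = β` and `μ` is a power of the isolated red cycle at `s(α)`. -/
theorem stmt16 {A : Type*} [CStarAlgebra A]
    (G : TwoGraph) (N : ℕ∞) (V : ℕ → Set G.Path) (hGBD : IsGBD G N V)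
    (F : CKFamily G A)
    (τ : A → ℂ)
    (hadd : ∀ a b, τ (a + b) = τ a + τ b)
    (hsmul : ∀ (c : ℂ) a, τ (c • a) = c * τ a)
    (htr : ∀ a b, τ (a * b) = τ (b * a))
    (α β μ : G.Path) (hα : G.IsBlue α) (hβ : G.IsBlue β) (hμ : G.IsRed μ)
    (lam : G.Path) (hlam : G.IsIsolatedRedCycle lam) (hlam' : G.r lam = G.s α)
    (h : τ (F.S α * F.S μ * star (F.S β)) ≠ 0 ∨
         τ (F.S α * star (F.S μ) * star (F.S β)) ≠ 0) :
    α = β ∧ ∃ m : ℕ, μ = G.cyclePow lam m := by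
  have hτ0 : τ 0 = 0 := by
    have := hsmul 0 0
    simpa using this
  rcases h with hne | hne
  · -- the case τ (s_α s_μ s_β*) ≠ 0
    have hsαrμ : G.s α = G.r μ := by
      by_contra hx
      apply hne
      rw [S_mul_S_eq_zero F hx, zero_mul, hτ0]
    have hsμsβ : G.s μ = G.s β := by
      by_contra hx
      apply hne
      rw [mul_assoc, S_mul_starS_eq_zero F hx, mul_zero, hτ0]
    have hrw : τ (F.S α * F.S μ * star (F.S β)) = τ (star (F.S β) * F.S α * F.S μ) := by
      rw [htr (F.S α * F.S μ) (star (F.S β)), ← mul_assoc]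
    have hrαrβ : G.r α = G.r β := by
      by_contra hx
      apply hne
      rw [hrw, starS_mul_S_eq_zero F (fun hh => hx hh.symm), zero_mul, hτ0]
    obtain ⟨nα, hnα⟩ := hGBD.cover (G.r α) (G.d_r α)
    have hsα : G.s α ∈ V (nα + (G.d α).1) := blue_path_level hGBD _ α hα rfl nα hnα
    have hsβ : G.s β ∈ V (nα + (G.d β).1) :=
      blue_path_level hGBD _ β hβ rfl nα (by rw [← hrαrβ]; exact hnα)
    obtain ⟨kμ, hrμV, hsμV⟩ := red_path_level hGBD _ μ hμ rfl
    have hl1 : nα + (G.d α).1 = kμ :=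
      level_unique hGBD hsα (by rw [hsαrμ]; exact hrμV)
    have hl2 : nα + (G.d β).1 = kμ :=
      level_unique hGBD hsβ (by rw [← hsμsβ]; exact hsμV)
    have hdab : G.d α = G.d β := by
      have e1 : G.d α = ((G.d α).1, (G.d α).2) := rfl
      have e2 : G.d β = ((G.d β).1, (G.d β).2) := rfl
      rw [e1, e2, hα, hβ]
      have : (G.d α).1 = (G.d β).1 := by omega
      rw [this]
    have hαβ : α = β := by
      by_contra hx
      apply hne
      rw [hrw, range_proj_orth F hGBD.rowFinite hdab hrαrβ hx, zero_mul, hτ0]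
    subst hαβ
    refine ⟨rfl, ?_⟩
    have hrμlam : G.r μ = G.r lam := by rw [hlam']; exact hsαrμ.symm
    have hsμlam : G.s μ = G.r lam := by rw [hlam']; exact hsμsβ
    exact red_closed_eq_pow G hlam (G.d μ).2 μ hμ rfl hrμlam hsμlam
  · -- the case τ (s_α s_μ* s_β*) ≠ 0
    have hsαsμ : G.s α = G.s μ := by
      by_contra hx
      apply hne
      rw [S_mul_starS_eq_zero F hx, zero_mul, hτ0]
    have hsβrμ : G.s β = G.r μ := by
      by_contra hx
      apply hne
      have hzz : star (F.S μ) * star (F.S β) = 0 := by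
        rw [← star_mul, S_mul_S_eq_zero F hx, star_zero]
      rw [mul_assoc, hzz, mul_zero, hτ0]
    have hrw : τ (F.S α * star (F.S μ) * star (F.S β)) =
        τ (star (F.S β) * F.S α * star (F.S μ)) := by
      rw [htr (F.S α * star (F.S μ)) (star (F.S β)), ← mul_assoc]
    have hrαrβ : G.r α = G.r β := by
      by_contra hx
      apply hne
      rw [hrw, starS_mul_S_eq_zero F (fun hh => hx hh.symm), zero_mul, hτ0]
    obtain ⟨nα, hnα⟩ := hGBD.cover (G.r α) (G.d_r α)
    have hsα : G.s α ∈ V (nα + (G.d α).1) := blue_path_level hGBD _ α hα rfl nα hnα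
    have hsβ : G.s β ∈ V (nα + (G.d β).1) :=
      blue_path_level hGBD _ β hβ rfl nα (by rw [← hrαrβ]; exact hnα)
    obtain ⟨kμ, hrμV, hsμV⟩ := red_path_level hGBD _ μ hμ rfl
    have hl1 : nα + (G.d α).1 = kμ :=
      level_unique hGBD hsα (by rw [hsαsμ]; exact hsμV)
    have hl2 : nα + (G.d β).1 = kμ :=
      level_unique hGBD hsβ (by rw [hsβrμ]; exact hrμV)
    have hdab : G.d α = G.d β := by
      have e1 : G.d α = ((G.d α).1, (G.d α).2) := rfl
      have e2 : G.d β = ((G.d β).1, (G.d β).2) := rfl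
      rw [e1, e2, hα, hβ]
      have : (G.d α).1 = (G.d β).1 := by omega
      rw [this]
    have hαβ : α = β := by
      by_contra hx
      apply hne
      rw [hrw, range_proj_orth F hGBD.rowFinite hdab hrαrβ hx, zero_mul, hτ0]
    subst hαβ
    refine ⟨rfl, ?_⟩
    have hrμlam : G.r μ = G.r lam := by rw [hlam']; exact hsβrμ.symm
    have hsμlam : G.s μ = G.r lam := by rw [hlam']; exact hsαsμ.symm
    exact red_closed_eq_pow G hlam (G.d μ).2 μ hμ rfl hrμlam hsμlam
end

section
/- Let M(𝕋) denote the set of Borel probability measures on the unit circle 𝕋 ⊆ ℂ. For θ ∈ ℝ let ρ̂_θ(μ) denote the pushforward of μ ∈ M(𝕋) under the rotation z ↦ e^{iθ}z, and for each integer k ≥ 1 define R̂_k(μ) := (1/k) ∑_{j=0}^{k−1} ρ̂_{2πj/k}(μ). Then, with closures taken in the total variation norm, ⋂_{n=1}^∞ closure( conv{ R̂_k(μ) : k ≥ n, μ ∈ M(𝕋) } ) = {m}, where m is the normalised Haar (Lebesgue) measure on 𝕋 and conv denotes the convex hull inside M(𝕋). -/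
/-!
Averaging over the `k`-th roots of unity kills the Fourier coefficient `μ̂(l) = ∫ z ^ l dμ`
whenever `k ∤ l`, so every measure in `conv{R̂_k μ : k ≥ n}` is a probability measure with
`μ̂(l) = 0` for `0 < |l| < n`. Fourier coefficients are Lipschitz for the total variation
distance, so a measure in the intersection is a probability measure all of whose nonzero Fourier
coefficients vanish. It then has the same Fourier coefficients as each of its rotations, and
trigonometric polynomials separate finite measures (Stone–Weierstrass), so it is rotation
invariant. Conversely `R̂_k m = m` for a rotation-invariant `m`.
-/

open MeasureTheory
open scoped ENNReal

namespace Stmt19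

/-- The unit circle `𝕋 ⊆ ℂ`. -/
abbrev Torus : Type := {z : ℂ // ‖z‖ = 1}

/-- Rotation of the circle by angle `θ`: `z ↦ e^{iθ} z`. -/
noncomputable def rot (θ : ℝ) (z : Torus) : Torus :=
  ⟨Complex.exp (θ * Complex.I) * z.1, by
    have h1 : ‖Complex.exp ((θ : ℂ) * Complex.I)‖ = 1 := by
      exact Complex.norm_exp_ofReal_mul_I θ
    rw [norm_mul, h1, z.2, one_mul]⟩

/-- The Markov pushforward `ρ̂_θ`: the image of `μ` under rotation by `θ`. -/
noncomputable def rhat (θ : ℝ) (μ : Measure Torus) : Measure Torus :=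
  Measure.map (rot θ) μ

/-- `R̂_k = (1/k) ∑_{j=0}^{k-1} ρ̂_{2πj/k}`. -/
noncomputable def Rhat (k : ℕ) (μ : Measure Torus) : Measure Torus :=
  (k : ℝ≥0∞)⁻¹ • ∑ j ∈ Finset.range k, rhat (2 * Real.pi * j / k) μ

/-- The total variation distance between (probability) measures:
`sup_A (|μ A - ν A|)`, which induces the total variation norm topology. -/
noncomputable def tvDist (μ ν : Measure Torus) : ℝ≥0∞ :=
  ⨆ (A : Set Torus) (_ : MeasurableSet A), ((μ A - ν A) + (ν A - μ A))

/-- Closure with respect to the total variation norm. -/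
def tvClosure (S : Set (Measure Torus)) : Set (Measure Torus) :=
  {μ | ∀ ε : ℝ≥0∞, 0 < ε → ∃ ν ∈ S, tvDist μ ν < ε}

/-- The convex hull (inside the probability measures): all finite convex
combinations of elements of `S`. -/
def convComb (S : Set (Measure Torus)) : Set (Measure Torus) :=
  {μ | ∃ (n : ℕ) (w : Fin n → ℝ≥0∞) (f : Fin n → Measure Torus),
    (∑ i, w i) = 1 ∧ (∀ i, f i ∈ S) ∧ μ = ∑ i, w i • f i}

open Set BoundedContinuousFunction
open scoped NNReal

section TotalVariation

variable {α : Type*} [MeasurableSpace α] {μ ν : Measure α} [IsFiniteMeasure μ] [IsFiniteMeasure ν]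
  {ε : ℝ}

lemma integral_le_integral_add_of_measureReal_le
    (h : ∀ A, MeasurableSet A → μ.real A ≤ ν.real A + ε) {g : α → ℝ} (hg : Measurable g)
    (h0 : ∀ x, 0 ≤ g x) (h1 : ∀ x, g x ≤ 1) : ∫ x, g x ∂μ ≤ ∫ x, g x ∂ν + ε := by
  have hint (ρ : Measure α) [IsFiniteMeasure ρ] : Integrable g ρ :=
    .of_bound hg.aestronglyMeasurable 1 <| ae_of_all _ fun x => by
      simpa [abs_of_nonneg (h0 x)] using h1 x
  have hlevel (ρ : Measure α) [IsFiniteMeasure ρ] :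
      IntegrableOn (fun t => ρ.real {x | t ≤ g x}) (Ioc 0 1) := by
    have hanti : Antitone fun t => ρ.real {x | t ≤ g x} :=
      fun s t hst => measureReal_mono fun x hx => hst.trans hx
    exact ((hanti.antitoneOn _).integrableOn_isCompact isCompact_Icc).mono_set Ioc_subset_Icc_self
  rw [(hint μ).integral_eq_integral_Ioc_meas_le (M := 1) (ae_of_all _ h0) (ae_of_all _ h1),
    (hint ν).integral_eq_integral_Ioc_meas_le (M := 1) (ae_of_all _ h0) (ae_of_all _ h1)]
  calc ∫ t in Ioc 0 1, μ.real {x | t ≤ g x}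
      ≤ ∫ t in Ioc 0 1, (ν.real {x | t ≤ g x} + ε) :=
        integral_mono_of_nonneg (ae_of_all _ fun _ => measureReal_nonneg)
          ((hlevel ν).add (integrableOn_const (by simp)))
          (ae_of_all _ fun t => h _ (measurableSet_le measurable_const hg))
    _ = (∫ t in Ioc 0 1, ν.real {x | t ≤ g x}) + ε := by
        rw [integral_add (hlevel ν) (integrableOn_const (by simp)), setIntegral_const]
        simp

lemma abs_integral_sub_le_of_abs_measureReal_sub_le
    (h : ∀ A, MeasurableSet A → |μ.real A - ν.real A| ≤ ε) {φ : α → ℝ} (hφ : Measurable φ)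
    (hb : ∀ x, |φ x| ≤ 1) : |∫ x, φ x ∂μ - ∫ x, φ x ∂ν| ≤ 2 * ε := by
  have hle (ψ : α → ℝ) (hψ : Measurable ψ) (hψb : ∀ x, ψ x ≤ 1) (ρ ρ' : Measure α)
      [IsFiniteMeasure ρ] [IsFiniteMeasure ρ']
      (hρ : ∀ A, MeasurableSet A → ρ.real A ≤ ρ'.real A + ε) :
      ∫ x, ((ψ x).toNNReal : ℝ) ∂ρ ≤ ∫ x, ((ψ x).toNNReal : ℝ) ∂ρ' + ε :=
    integral_le_integral_add_of_measureReal_le hρ hψ.real_toNNReal.coe_nnreal_real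
      (fun x => NNReal.coe_nonneg _) fun x => by simpa using hψb x
  have hμν A (hA : MeasurableSet A) : μ.real A ≤ ν.real A + ε := by
    linarith [(abs_le.mp (h A hA)).2]
  have hνμ A (hA : MeasurableSet A) : ν.real A ≤ μ.real A + ε := by
    linarith [(abs_le.mp (h A hA)).1]
  have hpos x : φ x ≤ 1 := (abs_le.mp (hb x)).2
  have hneg x : -φ x ≤ 1 := by linarith [(abs_le.mp (hb x)).1]
  have hint (ρ : Measure α) [IsFiniteMeasure ρ] : Integrable φ ρ :=
    .of_bound hφ.aestronglyMeasurable 1 (ae_of_all _ hb)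
  rw [integral_eq_integral_pos_part_sub_integral_neg_part (hint μ),
    integral_eq_integral_pos_part_sub_integral_neg_part (hint ν), abs_le]
  constructor <;> linarith [hle φ hφ hpos μ ν hμν, hle φ hφ hpos ν μ hνμ,
    hle (fun x => -φ x) hφ.neg hneg μ ν hμν, hle (fun x => -φ x) hφ.neg hneg ν μ hνμ]

lemma norm_integral_sub_le_of_abs_measureReal_sub_le
    (h : ∀ A, MeasurableSet A → |μ.real A - ν.real A| ≤ ε) {g : α → ℂ} (hg : Measurable g)
    (hb : ∀ x, ‖g x‖ ≤ 1) : ‖∫ x, g x ∂μ - ∫ x, g x ∂ν‖ ≤ 4 * ε := by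
  have hint (ρ : Measure α) [IsFiniteMeasure ρ] : Integrable g ρ :=
    .of_bound hg.aestronglyMeasurable 1 (ae_of_all _ hb)
  have hre := abs_integral_sub_le_of_abs_measureReal_sub_le h (Complex.measurable_re.comp hg)
    fun x => (Complex.abs_re_le_norm _).trans (hb x)
  have him := abs_integral_sub_le_of_abs_measureReal_sub_le h (Complex.measurable_im.comp hg)
    fun x => (Complex.abs_im_le_norm _).trans (hb x)
  have hre_int (ρ : Measure α) [IsFiniteMeasure ρ] : ∫ x, (g x).re ∂ρ = (∫ x, g x ∂ρ).re :=
    integral_re (hint ρ)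
  have him_int (ρ : Measure α) [IsFiniteMeasure ρ] : ∫ x, (g x).im ∂ρ = (∫ x, g x ∂ρ).im :=
    integral_im (hint ρ)
  simp only [Function.comp_apply, hre_int, him_int] at hre him
  calc ‖∫ x, g x ∂μ - ∫ x, g x ∂ν‖
      ≤ |(∫ x, g x ∂μ - ∫ x, g x ∂ν).re| + |(∫ x, g x ∂μ - ∫ x, g x ∂ν).im| :=
        Complex.norm_le_abs_re_add_abs_im _
    _ ≤ 4 * ε := by rw [Complex.sub_re, Complex.sub_im]; linarith

end TotalVariation

instance : CompactSpace Torus :=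
  isCompact_iff_compactSpace.mp (show IsCompact {z : ℂ | ‖z‖ = 1} by
    simpa [Metric.sphere] using isCompact_sphere (0 : ℂ) 1)

lemma torus_ne_zero (z : Torus) : (z : ℂ) ≠ 0 := by
  rintro h; simpa [h] using z.2

noncomputable def chi (l : ℤ) : Torus →ᵇ ℂ :=
  .mkOfCompact ⟨fun z => (z : ℂ) ^ l,
    continuous_subtype_val.zpow₀ l fun z => Or.inl (torus_ne_zero z)⟩

@[simp] lemma chi_apply (l : ℤ) (z : Torus) : chi l z = (z : ℂ) ^ l := rfl

lemma norm_chi_apply (l : ℤ) (z : Torus) : ‖chi l z‖ = 1 := by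
  simp [norm_zpow, z.2]

lemma chi_add (a b : ℤ) : chi (a + b) = chi a * chi b := by
  ext z; simp [zpow_add₀ (torus_ne_zero z)]

lemma chi_zero : chi 0 = 1 := by ext z; simp

lemma star_chi (l : ℤ) : star (chi l) = chi (-l) := by
  ext z
  have : (starRingEnd ℂ) (z : ℂ) = (z : ℂ)⁻¹ := by
    rw [Complex.inv_def, Complex.normSq_eq_norm_sq, z.2]; simp
  simp [this, inv_zpow']

lemma mem_span_chi_of_mem_adjoin {g : Torus →ᵇ ℂ}
    (hg : g ∈ StarAlgebra.adjoin ℂ (range chi)) : g ∈ Submodule.span ℂ (range chi) := by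
  have hstar : star (range chi) ⊆ range chi := by
    rintro _ ⟨l, hl⟩
    exact ⟨-l, by rw [← star_chi, hl, star_star]⟩
  have hmonoid : (Submonoid.closure (range chi ∪ star (range chi)) : Set (Torus →ᵇ ℂ)) ⊆
      range chi := by
    intro f hf
    induction hf using Submonoid.closure_induction with
    | mem f hf => exact (union_subset le_rfl hstar) hf
    | one => exact ⟨0, chi_zero⟩
    | mul f g _ _ hf hg =>
        obtain ⟨a, rfl⟩ := hf
        obtain ⟨b, rfl⟩ := hg
        exact ⟨a + b, chi_add a b⟩
  rw [← StarSubalgebra.mem_toSubalgebra, StarAlgebra.adjoin_toSubalgebra,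
    ← Subalgebra.mem_toSubmodule, Algebra.adjoin_eq_span] at hg
  exact Submodule.span_mono hmonoid hg

lemma Measure.ext_of_integral_chi_eq {μ ν : Measure Torus} [IsFiniteMeasure μ]
    [IsFiniteMeasure ν] (h : ∀ l, ∫ z, chi l z ∂μ = ∫ z, chi l z ∂ν) : μ = ν := by
  refine ext_of_forall_mem_subalgebra_integral_eq_of_pseudoEMetric_complete_countable
    (A := StarAlgebra.adjoin ℂ (range chi)) ?_ fun g hg => ?_
  · intro x y hxy
    refine ⟨_, ⟨_, ⟨chi 1, StarAlgebra.subset_adjoin ℂ (range chi) ⟨1, rfl⟩, rfl⟩, rfl⟩, ?_⟩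
    simpa [Subtype.ext_iff] using hxy
  · have hspan := mem_span_chi_of_mem_adjoin hg
    clear hg
    induction hspan using Submodule.span_induction with
    | mem f hf => obtain ⟨l, rfl⟩ := hf; exact h l
    | zero => simp
    | add f g _ _ hf hg =>
        simp only [coe_add, Pi.add_apply]
        rw [integral_add (f.integrable μ) (g.integrable μ),
          integral_add (f.integrable ν) (g.integrable ν), hf, hg]
    | smul c f _ hf =>
        simp only [coe_smul]
        rw [integral_smul, integral_smul, hf]

lemma measurable_rot (θ : ℝ) : Measurable (rot θ) :=
  (continuous_const.mul continuous_subtype_val).subtype_mk _ |>.measurable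

lemma chi_rot (l : ℤ) (θ : ℝ) (z : Torus) :
    chi l (rot θ z) = Complex.exp (θ * Complex.I) ^ l * chi l z :=
  mul_zpow _ _ _

lemma integral_chi_map_rot (l : ℤ) (θ : ℝ) (μ : Measure Torus) :
    ∫ z, chi l z ∂(μ.map (rot θ)) = Complex.exp (θ * Complex.I) ^ l * ∫ z, chi l z ∂μ := by
  rw [integral_map (measurable_rot θ).aemeasurable (chi l).continuous.aestronglyMeasurable]
  simp_rw [chi_rot, integral_const_mul]

lemma sum_exp_zpow_eq_zero {k : ℕ} {l : ℤ} (hk : k ≠ 0) (hl : ¬ (k : ℤ) ∣ l) :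
    ∑ j ∈ Finset.range k, Complex.exp ((2 * Real.pi * j / k : ℝ) * Complex.I) ^ l = 0 := by
  set ω := Complex.exp (2 * Real.pi * Complex.I / k)
  have hω : IsPrimitiveRoot ω k := Complex.isPrimitiveRoot_exp k hk
  have hterm (j : ℕ) : Complex.exp ((2 * Real.pi * j / k : ℝ) * Complex.I) ^ l = (ω ^ l) ^ j := by
    have hexp : Complex.exp ((2 * Real.pi * j / k : ℝ) * Complex.I) = ω ^ j := by
      rw [← Complex.exp_nat_mul]
      push_cast
      ring_nf
    rw [hexp, ← zpow_natCast, ← zpow_natCast (ω ^ l), ← zpow_mul, ← zpow_mul, mul_comm]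
  have hωl : (ω ^ l) ^ k = 1 := by
    rw [← zpow_natCast, ← zpow_mul, mul_comm, zpow_mul, zpow_natCast, hω.pow_eq_one, one_zpow]
  simp_rw [hterm, geom_sum_eq ((hω.zpow_eq_one_iff_dvd l).not.mpr hl), hωl, sub_self, zero_div]

instance isFiniteMeasure_rhat (θ : ℝ) (μ : Measure Torus) [IsFiniteMeasure μ] :
    IsFiniteMeasure (rhat θ μ) := by
  rw [rhat]; infer_instance

lemma integral_chi_Rhat_eq_zero {k : ℕ} {l : ℤ} (hl : ¬ (k : ℤ) ∣ l) (μ : Measure Torus)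
    [IsFiniteMeasure μ] : ∫ z, chi l z ∂(Rhat k μ) = 0 := by
  rcases eq_or_ne k 0 with rfl | hk
  · simp [Rhat]
  rw [Rhat, integral_smul_measure,
    integral_finsetSum_measure fun j _ => (chi l).integrable _]
  simp_rw [rhat, integral_chi_map_rot, ← Finset.sum_mul, sum_exp_zpow_eq_zero hk hl, zero_mul,
    smul_zero]

instance isProbabilityMeasure_rhat (θ : ℝ) (μ : Measure Torus) [IsProbabilityMeasure μ] :
    IsProbabilityMeasure (rhat θ μ) :=
  Measure.isProbabilityMeasure_map (measurable_rot θ).aemeasurable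

lemma isProbabilityMeasure_Rhat {k : ℕ} (hk : k ≠ 0) (μ : Measure Torus)
    [IsProbabilityMeasure μ] : IsProbabilityMeasure (Rhat k μ) := by
  constructor
  simp [Rhat, ENNReal.inv_mul_cancel, hk]

lemma measure_le_add_of_tvDist_le {μ ν : Measure Torus} {ε : ℝ≥0∞} (h : tvDist μ ν ≤ ε)
    {A : Set Torus} (hA : MeasurableSet A) : μ A ≤ ν A + ε ∧ ν A ≤ μ A + ε := by
  have hA' : μ A - ν A + (ν A - μ A) ≤ ε :=
    (le_iSup₂ (f := fun A (_ : MeasurableSet A) => μ A - ν A + (ν A - μ A)) A hA).trans h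
  exact ⟨tsub_le_iff_left.mp (le_self_add.trans hA'), tsub_le_iff_left.mp (le_add_self.trans hA')⟩

lemma abs_measureReal_sub_le_of_tvDist_le {μ ν : Measure Torus} [IsFiniteMeasure μ]
    [IsFiniteMeasure ν] {ε : ℝ≥0} (h : tvDist μ ν ≤ ε) {A : Set Torus} (hA : MeasurableSet A) :
    |μ.real A - ν.real A| ≤ ε := by
  obtain ⟨hμν, hνμ⟩ := measure_le_add_of_tvDist_le h hA
  have h₁ := ENNReal.toReal_le_add hμν (measure_ne_top ν A) ENNReal.coe_ne_top
  have h₂ := ENNReal.toReal_le_add hνμ (measure_ne_top μ A) ENNReal.coe_ne_top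
  rw [ENNReal.coe_toReal] at h₁ h₂
  simp only [measureReal_def]
  exact abs_sub_le_iff.mpr ⟨by linarith, by linarith⟩

lemma tvDist_self (μ : Measure Torus) : tvDist μ μ = 0 := by
  simp [tvDist]

lemma subset_tvClosure (S : Set (Measure Torus)) : S ⊆ tvClosure S :=
  fun μ hμ _ hε => ⟨μ, hμ, by rwa [tvDist_self]⟩

lemma isProbabilityMeasure_of_mem_tvClosure {S : Set (Measure Torus)}
    (hS : ∀ ν ∈ S, IsProbabilityMeasure ν) {μ : Measure Torus} (hμ : μ ∈ tvClosure S) :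
    IsProbabilityMeasure μ := by
  have hclose (ε : ℝ≥0) (hε : 0 < ε) : μ univ ≤ 1 + ε ∧ 1 ≤ μ univ + ε := by
    obtain ⟨ν, hν, hd⟩ := hμ ε (by exact_mod_cast hε)
    simpa [(hS ν hν).measure_univ] using measure_le_add_of_tvDist_le hd.le MeasurableSet.univ
  exact ⟨le_antisymm (ENNReal.le_of_forall_pos_le_add fun ε hε _ => (hclose ε hε).1)
    (ENNReal.le_of_forall_pos_le_add fun ε hε _ => (hclose ε hε).2)⟩

lemma integral_eq_zero_of_mem_tvClosure {S : Set (Measure Torus)} {g : Torus →ᵇ ℂ}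
    (hS : ∀ ν ∈ S, IsProbabilityMeasure ν ∧ ∫ z, g z ∂ν = 0) (hb : ∀ z, ‖g z‖ ≤ 1)
    {μ : Measure Torus} [IsFiniteMeasure μ] (hμ : μ ∈ tvClosure S) : ∫ z, g z ∂μ = 0 := by
  refine norm_le_zero_iff.mp (le_of_forall_pos_le_add fun ε hε => ?_)
  obtain ⟨ν, hν, hd⟩ := hμ (ENNReal.ofReal (ε / 4)) (by simpa using hε)
  obtain ⟨_, hg⟩ := hS ν hν
  have := norm_integral_sub_le_of_abs_measureReal_sub_le
    (fun A => abs_measureReal_sub_le_of_tvDist_le hd.le) g.continuous.measurable hb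
  rw [hg, sub_zero, Real.coe_toNNReal _ (by positivity)] at this
  linarith

lemma subset_convComb (S : Set (Measure Torus)) : S ⊆ convComb S :=
  fun μ hμ => ⟨1, fun _ => 1, fun _ => μ, by simp, fun _ => hμ, by simp⟩

lemma isProbabilityMeasure_of_mem_convComb {S : Set (Measure Torus)}
    (hS : ∀ ν ∈ S, IsProbabilityMeasure ν) {μ : Measure Torus} (hμ : μ ∈ convComb S) :
    IsProbabilityMeasure μ := by
  obtain ⟨n, w, f, hw, hf, rfl⟩ := hμ
  constructor
  simp [(hS _ (hf _)).measure_univ, hw]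

lemma integral_eq_zero_of_mem_convComb {S : Set (Measure Torus)} {g : Torus →ᵇ ℂ}
    (hS : ∀ ν ∈ S, IsProbabilityMeasure ν ∧ ∫ z, g z ∂ν = 0) {μ : Measure Torus}
    (hμ : μ ∈ convComb S) : ∫ z, g z ∂μ = 0 := by
  obtain ⟨n, w, f, hw, hf, rfl⟩ := hμ
  have hw_ne_top (i : Fin n) : w i ≠ ∞ :=
    ENNReal.sum_ne_top.mp (hw ▸ ENNReal.one_ne_top) i (Finset.mem_univ i)
  have hint (i : Fin n) : Integrable g (w i • f i) :=
    have := (hS _ (hf i)).1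
    (g.integrable _).smul_measure (hw_ne_top i)
  rw [integral_finsetSum_measure fun i _ => hint i]
  exact Finset.sum_eq_zero fun i _ => by rw [integral_smul_measure, (hS _ (hf i)).2, smul_zero]

def rotAverages (n : ℕ) : Set (Measure Torus) :=
  {x | ∃ k : ℕ, n ≤ k ∧ ∃ μ : Measure Torus, IsProbabilityMeasure μ ∧ x = Rhat k μ}

lemma isProbabilityMeasure_of_mem_rotAverages {n : ℕ} (hn : 1 ≤ n) {ν : Measure Torus}
    (hν : ν ∈ rotAverages n) : IsProbabilityMeasure ν := by
  obtain ⟨k, hk, μ, hμ, rfl⟩ := hν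
  exact isProbabilityMeasure_Rhat (by omega) μ

lemma integral_chi_eq_zero_of_mem_rotAverages {n : ℕ} {l : ℤ} (hl : l ≠ 0) (hln : l.natAbs < n)
    {ν : Measure Torus} (hν : ν ∈ rotAverages n) : ∫ z, chi l z ∂ν = 0 := by
  obtain ⟨k, hk, μ, hμ, rfl⟩ := hν
  refine integral_chi_Rhat_eq_zero (fun hdvd => ?_) μ
  have := Int.natAbs_le_of_dvd_ne_zero hdvd hl
  omega

lemma isProbabilityMeasure_of_mem_convComb_rotAverages {n : ℕ} (hn : 1 ≤ n)
    {ν : Measure Torus} (hν : ν ∈ convComb (rotAverages n)) : IsProbabilityMeasure ν :=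
  isProbabilityMeasure_of_mem_convComb (fun _ => isProbabilityMeasure_of_mem_rotAverages hn) hν

lemma integral_chi_eq_zero_of_mem_convComb_rotAverages {n : ℕ} {l : ℤ} (hl : l ≠ 0)
    (hln : l.natAbs < n) {ν : Measure Torus} (hν : ν ∈ convComb (rotAverages n)) :
    ∫ z, chi l z ∂ν = 0 :=
  integral_eq_zero_of_mem_convComb (fun _ hσ => ⟨isProbabilityMeasure_of_mem_rotAverages
    (by omega) hσ, integral_chi_eq_zero_of_mem_rotAverages hl hln hσ⟩) hν

lemma map_rot_eq_self_of_integral_chi_eq_zero {μ : Measure Torus} [IsFiniteMeasure μ]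
    (h : ∀ l ≠ 0, ∫ z, chi l z ∂μ = 0) (θ : ℝ) : μ.map (rot θ) = μ := by
  refine Measure.ext_of_integral_chi_eq fun l => ?_
  rw [integral_chi_map_rot]
  rcases eq_or_ne l 0 with rfl | hl
  · simp
  · rw [h l hl, mul_zero]

lemma Rhat_eq_self_of_map_rot_eq_self {μ : Measure Torus} (h : ∀ θ, μ.map (rot θ) = μ) {k : ℕ}
    (hk : k ≠ 0) : Rhat k μ = μ := by
  simp [Rhat, rhat, h, ← Nat.cast_smul_eq_nsmul ℝ≥0∞, smul_smul, ENNReal.inv_mul_cancel, hk]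

/-- `⋂_{n=1}^∞ closure(conv{R̂_k(μ) : k ≥ n, μ ∈ M(𝕋)}) = {m}`, where `m`, the normalised
Haar (Lebesgue) measure on `𝕋`, is characterised as the unique rotation-invariant Borel
probability measure on `𝕋`. -/
theorem stmt19 :
    (⋂ (n : ℕ) (_ : 1 ≤ n),
        tvClosure (convComb
          {x : Measure Torus | ∃ k : ℕ, n ≤ k ∧
            ∃ μ : Measure Torus, IsProbabilityMeasure μ ∧ x = Rhat k μ}))
      = {m : Measure Torus | IsProbabilityMeasure m ∧
          ∀ θ : ℝ, Measure.map (rot θ) m = m} := by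
  ext x
  simp only [mem_iInter, mem_ofPred_eq]
  constructor
  · intro hx
    have hprob : IsProbabilityMeasure x := isProbabilityMeasure_of_mem_tvClosure
      (fun _ => isProbabilityMeasure_of_mem_convComb_rotAverages le_rfl) (hx 1 le_rfl)
    have hchi (l : ℤ) (hl : l ≠ 0) : ∫ z, chi l z ∂x = 0 :=
      integral_eq_zero_of_mem_tvClosure
        (fun _ hν => ⟨isProbabilityMeasure_of_mem_convComb_rotAverages (by omega) hν,
          integral_chi_eq_zero_of_mem_convComb_rotAverages hl (Nat.lt_succ_self _) hν⟩)
        (fun z => (norm_chi_apply l z).le) (hx (l.natAbs + 1) (by omega))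
    exact ⟨hprob, map_rot_eq_self_of_integral_chi_eq_zero hchi⟩
  · rintro ⟨hm, hinv⟩ n hn
    exact subset_tvClosure _ <| subset_convComb _
      ⟨n, le_rfl, x, hm, (Rhat_eq_self_of_map_rot_eq_self hinv (by omega)).symm⟩

end Stmt19
end
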